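/- Let f : GL(d,ℝ)^k → ℝ be an invariant function with variation functions F₁,…,F_k. Let g₁,…,g_k : (−ε,ε) → GL(d,ℝ) be differentiable paths, and set u_i := g_i'(0)·g_i(0)⁻¹ ∈ M_d(ℝ). Then the derivative at s = 0 of the map s ↦ f(g₁(s),…,g_k(s)) equals Σ_{i=1}^{k} tr(F_i(g₁(0),…,g_k(0))·u_i). (In the paper this computes the differential of the induced function f_ᾱ on the character variety against the cocycle u representing a deformation of a representation.) -/

import Mathlib

/-!
The map `f` is differentiable at the tuple `g(0)`, an interior point of the open set of
invertible tuples, so by the chain rule the derivative is `Df(g(0))` applied to `g'(0)`, which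
splits into a sum over single-coordinate directions. In coordinate `i` the direction `g_i'(0)`
is also the velocity at `0` of `t ↦ exp(t u_i) g_i(0)`, along which the variation function gives
the derivative `tr (F_i u_i)`; uniqueness of derivatives identifies the two.
-/

open Matrix

attribute [local instance] Matrix.normedAddCommGroup Matrix.normedSpace

noncomputable section

/-- An invariant multi-function on `GL(d,ℝ)^k`: a real-valued function on `k`-tuples of
`d × d` real matrices that is differentiable on the open set of tuples of invertible
matrices and invariant under the diagonal action of `GL(d,ℝ)` by conjugation. -/
def IsInvariantFun (d k : ℕ) (f : (Fin k → Matrix (Fin d) (Fin d) ℝ) → ℝ) : Prop :=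
  DifferentiableOn ℝ f {g : Fin k → Matrix (Fin d) (Fin d) ℝ | ∀ i, IsUnit (g i)} ∧
  ∀ h : Matrix (Fin d) (Fin d) ℝ, IsUnit h →
    ∀ g : Fin k → Matrix (Fin d) (Fin d) ℝ, (∀ i, IsUnit (g i)) →
      f (fun i => h * g i * h⁻¹) = f g

/-- `F` is the tuple of variation functions of `f` with respect to the trace form
`𝔅(X,Y) = tr (X*Y)`: the matrix `F j g` satisfies that `tr (F j g * X)` is the derivative
at `t = 0` of `t ↦ f (g₁, …, exp(tX)·g_j, …, g_k)`, for every `X`. -/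
def IsVariationFun (d k : ℕ) (f : (Fin k → Matrix (Fin d) (Fin d) ℝ) → ℝ)
    (F : Fin k → (Fin k → Matrix (Fin d) (Fin d) ℝ) → Matrix (Fin d) (Fin d) ℝ) : Prop :=
  ∀ (j : Fin k) (g : Fin k → Matrix (Fin d) (Fin d) ℝ), (∀ i, IsUnit (g i)) →
    ∀ X : Matrix (Fin d) (Fin d) ℝ,
      HasDerivAt
        (fun t : ℝ => f (Function.update g j (NormedSpace.exp (t • X) * g j)))
        (Matrix.trace (F j g * X)) 0

theorem Matrix.isOpen_setOf_isUnit {m R : Type*} [Fintype m] [DecidableEq m] [Field R]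
    [TopologicalSpace R] [IsTopologicalRing R] [T1Space R] :
    IsOpen {A : Matrix m m R | IsUnit A} := by
  simp only [isUnit_iff_isUnit_det, isUnit_iff_ne_zero]
  exact isOpen_ne.preimage continuous_id.matrix_det

theorem Matrix.hasDerivAt_exp_smul_mul {m 𝕂 : Type*} [Fintype m] [DecidableEq m] [RCLike 𝕂]
    (X A : Matrix m m 𝕂) (t : 𝕂) :
    HasDerivAt (fun u : 𝕂 => NormedSpace.exp (u • X) * A)
      (NormedSpace.exp (t • X) * X * A) t := by
  -- Any submultiplicative norm will do: `HasDerivAt` only sees the (product) topology.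
  open scoped Norms.Operator in exact (hasDerivAt_exp_smul_const X t).mul_const A

section CoordinatePaths

variable {𝕜 ι E F : Type*} [NontriviallyNormedField 𝕜] [Fintype ι] [DecidableEq ι]
  [NormedAddCommGroup E] [NormedSpace 𝕜 E] [NormedAddCommGroup F] [NormedSpace 𝕜 F]
  {f : (ι → E) → F} {D : (ι → E) →L[𝕜] F} {x : ι → E} {a : 𝕜} {g : ι → 𝕜 → E} {g' : ι → E}

theorem HasFDerivAt.apply_single_eq_of_hasDerivAt_update (hf : HasFDerivAt f D x) {j : ι}
    {c : 𝕜 → E} {v : E} (hc : HasDerivAt c v a) (hca : c a = x j) {L : F}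
    (hL : HasDerivAt (fun t => f (Function.update x j (c t))) L a) :
    D (Pi.single j v) = L := by
  have hpath : HasDerivAt (fun t => Function.update x j (c t)) (Pi.single j v) a := by
    refine hasDerivAt_pi.mpr fun i => ?_
    rcases eq_or_ne i j with rfl | hij
    · simpa using hc
    · simpa [hij] using hasDerivAt_const a (x i)
  rw [← Function.update_eq_self j x, ← hca] at hf
  exact (hf.comp_hasDerivAt a hpath).unique hL

theorem HasFDerivAt.hasDerivAt_comp_of_hasDerivAt_update
    (hf : HasFDerivAt f D (fun i => g i a)) (hg : ∀ i, HasDerivAt (g i) (g' i) a)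
    {c : ι → 𝕜 → E} (hc : ∀ i, HasDerivAt (c i) (g' i) a) (hca : ∀ i, c i a = g i a) {L : ι → F}
    (hL : ∀ i, HasDerivAt (fun t => f (Function.update (fun i => g i a) i (c i t))) (L i) a) :
    HasDerivAt (fun s => f (fun i => g i s)) (∑ i, L i) a := by
  have hD : D g' = ∑ i, L i := by
    rw [← Finset.univ_sum_single g', map_sum]
    exact Finset.sum_congr rfl fun i _ =>
      hf.apply_single_eq_of_hasDerivAt_update (hc i) (hca i) (hL i)
  exact hD ▸ hf.comp_hasDerivAt a (hasDerivAt_pi.mpr hg)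

end CoordinatePaths

/-- for an invariant function `f` with variation functions `F` and
differentiable paths `g_i : (-ε,ε) → GL(d,ℝ)` with logarithmic derivatives
`u_i = g_i'(0)·g_i(0)⁻¹`, the derivative at `s = 0` of `s ↦ f (g₁(s),…,g_k(s))`
equals `Σ_i tr (F_i (g₁(0),…,g_k(0)) · u_i)`. -/
theorem deriv_of_invariant_function_along_paths (d k : ℕ)
    (f : (Fin k → Matrix (Fin d) (Fin d) ℝ) → ℝ)
    (F : Fin k → (Fin k → Matrix (Fin d) (Fin d) ℝ) → Matrix (Fin d) (Fin d) ℝ)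
    (hf : IsInvariantFun d k f) (hF : IsVariationFun d k f F)
    (ε : ℝ) (hε : 0 < ε)
    (g : Fin k → ℝ → Matrix (Fin d) (Fin d) ℝ)
    (g' : Fin k → Matrix (Fin d) (Fin d) ℝ)
    (hgdiff : ∀ i, HasDerivAt (g i) (g' i) 0)
    (hgunit : ∀ i, ∀ s ∈ Set.Ioo (-ε) ε, IsUnit (g i s)) :
    HasDerivAt (fun s : ℝ => f (fun i => g i s))
      (∑ i, Matrix.trace (F i (fun j => g j 0) * (g' i * (g i 0)⁻¹))) 0 := by
  set g₀ : Fin k → Matrix (Fin d) (Fin d) ℝ := fun j => g j 0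
  have hunit : ∀ i, IsUnit (g₀ i) := fun i => hgunit i 0 ⟨neg_lt_zero.mpr hε, hε⟩
  have hopen : IsOpen {h : Fin k → Matrix (Fin d) (Fin d) ℝ | ∀ i, IsUnit (h i)} := by
    rw [Set.ofPred_forall]
    exact isOpen_iInter_of_finite fun i => Matrix.isOpen_setOf_isUnit.preimage
      (continuous_apply (A := fun _ : Fin k => Matrix (Fin d) (Fin d) ℝ) i)
  have hdiff : DifferentiableAt ℝ f g₀ := hf.1.differentiableAt (hopen.mem_nhds hunit)
  have hvel : ∀ i, HasDerivAt (fun t : ℝ => NormedSpace.exp (t • (g' i * (g₀ i)⁻¹)) * g₀ i)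
      (g' i) 0 := fun i => by
    simpa [Matrix.nonsing_inv_mul_cancel_right _ _ ((isUnit_iff_isUnit_det _).mp (hunit i))]
      using Matrix.hasDerivAt_exp_smul_mul (g' i * (g₀ i)⁻¹) (g₀ i) 0
  exact hdiff.hasFDerivAt.hasDerivAt_comp_of_hasDerivAt_update hgdiff hvel (fun _ => by simp [g₀])
    fun i => hF i g₀ hunit _

end
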